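/- arXiv:2310.20179 — 2 statements merged into one kernel-verified Lean document; each statement's English description precedes it below -/
import Mathlib

section
/- Let s ≥ 2 be an integer, q = 2^s, m an integer with m ≡ 2 (mod 4) and m ≥ 6, and n = q^m − 1. Let b = q^{m−2} and a = q^{(m−2)/2} + 1. Then gcd(a, n) = 1, and for every integer i with −(q−1) ≤ i ≤ q^{(m−2)/2} + q − 2, the residue (b + a·i) mod n belongs to T_{(q,m;1)}. -/
/-- The `q`-weight of a nonnegative integer: the sum of its base-`q` digits. -/
def qWeight (q i : ℕ) : ℕ := (Nat.digits q i).sum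

/-- The set `T_{(q,m;j)} = {i : 1 ≤ i ≤ q^m − 2, wt_q(i) ≡ j (mod 2)}` as a finset. -/
def Tset (q m j : ℕ) : Finset ℕ :=
  (Finset.Icc 1 (q ^ m - 2)).filter fun i => qWeight q i % 2 = j

/-!
Write `A = q^k` with `k = (m - 2) / 2`, so `b = A²`, `a = A + 1` and `n = A²q² - 1`.

Coprimality: `k = 2j` is even, so with `Q = q²` we have `a = Q^j + 1` and `n = Q^(2j+1) - 1 ≡ Q - 1`
modulo `a`; since `Q - 1 ∣ Q^j - 1 = a - 2` and `a` is odd, `a` is coprime to `n`.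

Weights: `b + a i` lies in `[1, n - 1]` and splits into base-`A` blocks whose `q`-weights are
explicit: `(A - t) + A (A - t - 1)` for `i = -t`, `i + A (i + A)` for `0 ≤ i < A`, and
`r + A (r + 1 + 2A)` for `i = A + r`. In each case the weights add up to an odd number
(the last case needs `2 < q`, so that `2` is a single digit).
-/

theorem isCoprime_pow_add_one_pow_two_mul_add_one_sub_one {Q : ℤ} (hQ : Even Q) {j : ℕ}
    (hj : j ≠ 0) : IsCoprime (Q ^ j + 1) (Q ^ (2 * j + 1) - 1) := by
  have h_two : IsCoprime (Q ^ j + 1) 2 :=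
    Int.isCoprime_two_right.2 (hQ.pow_of_ne_zero hj).add_one
  have h_sub : IsCoprime (Q ^ j + 1) (Q ^ j - 1) := by
    rw [show Q ^ j - 1 = -2 + (Q ^ j + 1) * 1 by ring, IsCoprime.add_mul_left_right_iff,
      IsCoprime.neg_right_iff]
    exact h_two
  have h_base : IsCoprime (Q ^ j + 1) (Q - 1) :=
    h_sub.of_isCoprime_of_dvd_right (by simpa using sub_dvd_pow_sub_pow Q 1 j)
  rwa [show Q ^ (2 * j + 1) - 1 = (Q - 1) + (Q ^ j + 1) * (Q * (Q ^ j - 1)) by ring,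
    IsCoprime.add_mul_left_right_iff]

section qWeight

variable {q : ℕ}

theorem qWeight_of_lt {r : ℕ} (hr : r < q) : qWeight q r = r := by
  rcases Nat.eq_zero_or_pos r with rfl | hr0
  · simp [qWeight]
  · simp [qWeight, Nat.digits_of_lt q r hr0.ne' hr]

theorem qWeight_add_pow_mul (hq : 1 < q) {k a : ℕ} (ha : a < q ^ k) (b : ℕ) :
    qWeight q (a + q ^ k * b) = qWeight q a + qWeight q b := by
  rcases Nat.eq_zero_or_pos b with rfl | hb
  · simp [qWeight]
  have hlen := (Nat.digits_length_le_iff hq a).2 ha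
  rw [qWeight, ← Nat.add_sub_cancel' hlen, ← Nat.digits_append_zeroes_append_digits hq hb]
  simp [qWeight]

theorem qWeight_pow_sub_one (hq : 1 < q) (h : ℕ) : qWeight q (q ^ h - 1) = h * (q - 1) := by
  induction h with
  | zero => simp [qWeight]
  | succ h ih =>
    have hpos : 1 ≤ q ^ h := Nat.one_le_pow _ _ (by omega)
    have hsplit : q ^ (h + 1) - 1 = (q - 1) + q ^ 1 * (q ^ h - 1) := by
      have : q ≤ q * q ^ h := Nat.le_mul_of_pos_right q hpos
      rw [pow_succ', pow_one, Nat.mul_sub, mul_one]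
      omega
    rw [hsplit, qWeight_add_pow_mul hq (by simp; omega), qWeight_of_lt (by omega), ih]
    ring

theorem qWeight_pow_sub (hq : 1 < q) {h t : ℕ} (hh : 1 ≤ h) (ht : 1 ≤ t) (htq : t ≤ q) :
    qWeight q (q ^ h - t) = (q - t) + (h - 1) * (q - 1) := by
  obtain ⟨h, rfl⟩ : ∃ h', h = h' + 1 := ⟨h - 1, by omega⟩
  have hpos : 1 ≤ q ^ h := Nat.one_le_pow _ _ (by omega)
  have hsplit : q ^ (h + 1) - t = (q - t) + q ^ 1 * (q ^ h - 1) := by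
    have : q ≤ q * q ^ h := Nat.le_mul_of_pos_right q hpos
    rw [pow_succ', pow_one, Nat.mul_sub, mul_one]
    omega
  rw [hsplit, qWeight_add_pow_mul hq (by simp; omega), qWeight_of_lt (by omega),
    qWeight_pow_sub_one hq]
  simp

theorem mem_Tset_one_of_odd {m v : ℕ} (hv : 1 ≤ v) (hvm : v + 2 ≤ q ^ m)
    (hw : Odd (qWeight q v)) : v ∈ Tset q m 1 := by
  simp only [Tset, Finset.mem_filter, Finset.mem_Icc]
  exact ⟨⟨hv, by omega⟩, Nat.odd_iff.1 hw⟩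

theorem exists_natCast_eq_odd_qWeight (hq : 2 < q) {k : ℕ} (hk : 1 ≤ k) {i : ℤ}
    (hlo : -((q : ℤ) - 1) ≤ i) (hhi : i ≤ (q : ℤ) ^ k + q - 2) :
    ∃ v : ℕ, (q : ℤ) ^ k * q ^ k + ((q : ℤ) ^ k + 1) * i = v ∧ 1 ≤ v ∧
      v < 3 * (q ^ k * q ^ k) ∧ Odd (qWeight q v) := by
  have hqA : q ≤ q ^ k := Nat.le_self_pow (by omega) q
  have hAc : ((q ^ k : ℕ) : ℤ) = (q : ℤ) ^ k := by push_cast; rfl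
  rw [← hAc] at hhi ⊢
  have hq1 : 1 < q := by omega
  set A := q ^ k with hA
  rcases lt_or_ge i 0 with hneg | hnonneg
  · obtain ⟨t, rfl⟩ : ∃ t : ℕ, i = -t := ⟨(-i).toNat, by omega⟩
    refine ⟨(A - t) + A * (A - (t + 1)), ?_, ?_, ?_, ?_⟩
    · push_cast [show t + 1 ≤ A by omega, show t ≤ A by omega]
      ring
    · omega
    · have : A * (A - (t + 1)) ≤ A * A := Nat.mul_le_mul_left _ (Nat.sub_le _ _)
      have : A ≤ A * A := Nat.le_mul_self A
      omega
    · rw [qWeight_add_pow_mul hq1 (by omega), hA, qWeight_pow_sub hq1 hk (by omega) (by omega),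
        qWeight_pow_sub hq1 hk (by omega) (by omega), Nat.odd_iff]
      omega
  rcases lt_or_ge i A with hsmall | hbig
  · obtain ⟨j, rfl⟩ : ∃ j : ℕ, i = j := ⟨i.toNat, by omega⟩
    have hj : j < A := by omega
    refine ⟨j + A * (j + A * 1), by push_cast; ring, ?_, ?_, ?_⟩
    · have : 1 ≤ A := by omega
      nlinarith
    · nlinarith
    · rw [qWeight_add_pow_mul hq1 hj, qWeight_add_pow_mul hq1 hj, qWeight_of_lt hq1,
        Nat.odd_iff]
      omega
  · obtain ⟨r, rfl⟩ : ∃ r : ℕ, i = A + r := ⟨(i - A).toNat, by omega⟩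
    have hr : r + 1 < q := by omega
    refine ⟨r + A * ((r + 1) + A * 2), by push_cast; ring, ?_, ?_, ?_⟩
    · nlinarith
    · nlinarith
    · rw [qWeight_add_pow_mul hq1 (by omega), qWeight_add_pow_mul hq1 (by omega),
        qWeight_of_lt (by omega : r < q), qWeight_of_lt hr, qWeight_of_lt hq,
        Nat.odd_iff]
      omega

end qWeight

theorem stmt5 (s q m n : ℕ) (hs : 2 ≤ s) (hq : q = 2 ^ s)
    (hm : 6 ≤ m) (hmod4 : m % 4 = 2) (hn : n = q ^ m - 1)
    (b a : ℤ) (hb : b = (q : ℤ) ^ (m - 2)) (ha : a = (q : ℤ) ^ ((m - 2) / 2) + 1) :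
    Int.gcd a (n : ℤ) = 1 ∧
      ∀ i : ℤ, -((q : ℤ) - 1) ≤ i → i ≤ (q : ℤ) ^ ((m - 2) / 2) + (q : ℤ) - 2 →
        ((b + a * i) % (n : ℤ)).toNat ∈ Tset q m 1 := by
  have hq2 : 2 < q := hq ▸ (show 2 < 2 ^ 2 by norm_num).trans_le (Nat.pow_le_pow_right two_pos hs)
  have hq_even : Even (q : ℤ) := hq ▸ by push_cast; exact (Int.even_pow.2 ⟨even_two, by omega⟩)
  set k := (m - 2) / 2
  obtain ⟨j, hj⟩ : ∃ j, k = 2 * j := ⟨k / 2, by omega⟩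
  have hmk : m = k + k + 2 := by omega
  have hn' : (n : ℤ) = (q : ℤ) ^ m - 1 := by
    have := Nat.one_le_pow m q (by omega)
    rw [hn]; push_cast [this]; ring
  refine ⟨?_, fun i hlo hhi => ?_⟩
  · rw [← Int.isCoprime_iff_gcd_eq_one, ha, hn', hmk, hj]
    convert isCoprime_pow_add_one_pow_two_mul_add_one_sub_one
      (hq_even.pow_of_ne_zero two_ne_zero) (j := j) (by omega) using 2 <;> ring
  · obtain ⟨v, hv, hv1, hv3, hw⟩ := exists_natCast_eq_odd_qWeight hq2 (by omega) hlo hhi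
    have hvm : v + 2 ≤ q ^ m := by
      have : 4 ≤ q * q := by nlinarith
      have : 1 ≤ q ^ k := Nat.one_le_pow k q (by omega)
      rw [hmk, pow_add, pow_add]; nlinarith
    have hbav : b + a * i = v := by rw [hb, ha, ← hv, show m - 2 = k + k by omega, pow_add]
    rw [hbav, Int.emod_eq_of_lt (by positivity) (by rw [hn']; omega), Int.toNat_natCast]
    exact mem_Tset_one_of_odd hv1 hvm hw
end

section
/- Let s ≥ 2 be an integer, q = 2^s, m an integer with m ≡ 0 (mod 4) and m ≥ 4, and n = q^m − 1. Let a = (q^m − 1)/(q − 1) − 2·((q^{(m+2)/2} − 1)/(q − 1)). Then gcd(a, n) = 1, and for every integer i with 1 ≤ i ≤ q^{(m−2)/2}, the residue (a·i) mod n belongs to T_{(q,m;1)}. -/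
/-!
Write `m = 2t + 2`, so that `t` is odd, and `q^t = (q - 1)ρ + 1`. Then `a = (q - 1)q²ρ² - q - 1`,
so `(q - 1)a = n - 2(q^(t+2) - 1)` and `a + 2 = (q - 1)(q²ρ² - 1)`. As `n` is odd, a common
divisor of `a` and `n` divides `q^(t+2) - 1`, hence `q^gcd(m, t+2) - 1 = q - 1`, hence `2`.

For `1 ≤ i ≤ q^t` write `i = (q - 1)k + b` with `1 ≤ b ≤ q - 1`. If `2k + 1 ≤ bρ`, then the
low `t + 2` base-`q` digits of `a·i mod n` are the complements of those of `c + q^t(b + qb)`,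
where `c = bρ - 2k - 1`, and its high digits are those of `c`; its weight is `(t + 2)(q - 1) - 2b`.
Otherwise `b = 1` and `a·i ≡ -x` with `x = (q^t - z) + q^(t+1)(1 + qz)` and `z = 2k - ρ` odd, so
`a·i mod n = n - x` has weight `m(q - 1) - (t(q - 1) + 2)`. Both weights are odd.
-/

section qWeight

variable {q : ℕ}

lemma qWeight_add_mul (hq : 1 < q) {d : ℕ} (hd : d < q) (A : ℕ) :
    qWeight q (d + q * A) = d + qWeight q A := by
  by_cases h : d = 0 ∧ A = 0
  · obtain ⟨rfl, rfl⟩ := h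
    simp [qWeight]
  · rw [qWeight, Nat.digits_add q hq d A hd (by tauto), List.sum_cons, qWeight]

lemma qWeight_of_lt_s9 (hq : 1 < q) {d : ℕ} (hd : d < q) : qWeight q d = d := by
  simpa [qWeight] using qWeight_add_mul hq hd 0

lemma exists_eq_add_mul_lt (hq : 0 < q) (x : ℕ) : ∃ d A, x = d + q * A ∧ d < q :=
  ⟨x % q, x / q, (Nat.mod_add_div x q).symm, Nat.mod_lt x hq⟩

lemma qWeight_add_one (hq : 1 < q) {x : ℕ} (hx : ¬ q ∣ x + 1) :
    qWeight q (x + 1) = qWeight q x + 1 := by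
  obtain ⟨d, A, rfl, hd⟩ := exists_eq_add_mul_lt (q := q) (by omega) x
  have hd1 : d + 1 < q := by
    refine lt_of_le_of_ne hd fun h => hx ⟨A + 1, ?_⟩
    rw [mul_add, mul_one, ← h]
    ring
  rw [add_right_comm, qWeight_add_mul hq hd1, qWeight_add_mul hq hd]
  omega

lemma qWeight_add_pow_mul_s9 (hq : 1 < q) {e L : ℕ} (hL : L < q ^ e) (A : ℕ) :
    qWeight q (L + q ^ e * A) = qWeight q L + qWeight q A := by
  rcases Nat.eq_zero_or_pos A with rfl | hA
  · simp [qWeight]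
  have hlen := (Nat.digits_length_le_iff hq L).2 hL
  have h := Nat.digits_append_zeroes_append_digits (n := L) (k := e - (q.digits L).length) hq hA
  rw [Nat.add_sub_cancel' hlen] at h
  simp [qWeight, ← h]

lemma qWeight_add_qWeight_of_add_add_one_eq_pow (hq : 1 < q) {e : ℕ} :
    ∀ {x y : ℕ}, x + y + 1 = q ^ e → qWeight q x + qWeight q y = e * (q - 1) := by
  induction e with
  | zero =>
    intro x y h
    obtain ⟨rfl, rfl⟩ : x = 0 ∧ y = 0 := by simp at h; omega
    simp [qWeight]
  | succ e ih =>
    intro x y h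
    obtain ⟨x₀, x₁, rfl, hx⟩ := exists_eq_add_mul_lt (q := q) (by omega) x
    obtain ⟨y₀, y₁, rfl, hy⟩ := exists_eq_add_mul_lt (q := q) (by omega) y
    rw [pow_succ'] at h
    have hhigh : x₁ + y₁ + 1 = q ^ e := by
      apply le_antisymm
      · exact Nat.lt_of_mul_lt_mul_left (a := q) (by linarith)
      · exact Nat.le_of_lt_succ (Nat.lt_of_mul_lt_mul_left (a := q) (by linarith))
    have hlow : x₀ + y₀ + 1 = q := by
      rw [← hhigh] at h
      linarith
    rw [qWeight_add_mul hq hx, qWeight_add_mul hq hy, add_mul, one_mul, ← ih hhigh]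
    omega

lemma qWeight_compl_add_pow_mul (hq : 1 < q) {t b c L : ℕ} (hb : b < q) (hc : c < q ^ t)
    (hL : L + (c + q ^ t * (b + q * b)) + 1 = q ^ (t + 2)) :
    qWeight q (L + q ^ (t + 2) * c) + 2 * b = (t + 2) * (q - 1) := by
  have hcompl := qWeight_add_qWeight_of_add_add_one_eq_pow hq hL
  rw [qWeight_add_pow_mul_s9 hq hc, qWeight_add_mul hq hb, qWeight_of_lt_s9 hq hb] at hcompl
  rw [qWeight_add_pow_mul_s9 hq (by omega)]
  omega

lemma qWeight_add_pow_succ_mul (hq : 1 < q) {t u w : ℕ} (hu : u + w + 1 = q ^ t)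
    (hw : ¬ q ∣ w + 1) :
    qWeight q (u + q ^ (t + 1) * (1 + q * (w + 1))) = t * (q - 1) + 2 := by
  have hut : u < q ^ (t + 1) := by rw [pow_succ]; nlinarith
  rw [qWeight_add_pow_mul_s9 hq hut, qWeight_add_mul hq hq, qWeight_add_one hq hw,
    ← qWeight_add_qWeight_of_add_add_one_eq_pow hq hu]
  ring

end qWeight

lemma ediv_sub_two_mul_ediv_eq {q ρ : ℤ} {t : ℕ} (hq : q ≠ 1)
    (hρ : q ^ t = (q - 1) * ρ + 1) :
    (q ^ (2 * t + 2) - 1) / (q - 1) - 2 * ((q ^ (t + 2) - 1) / (q - 1)) =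
      (q - 1) * q ^ 2 * ρ ^ 2 - q - 1 := by
  have h₁ : q ^ (t + 2) - 1 = (q - 1) * (q ^ 2 * ρ + q + 1) := by
    rw [pow_add, hρ]; ring
  have h₂ :
      q ^ (2 * t + 2) - 1 = (q - 1) * ((q - 1) * q ^ 2 * ρ ^ 2 + 2 * q ^ 2 * ρ + q + 1) := by
    rw [show q ^ (2 * t + 2) = q ^ t * q ^ t * q ^ 2 by ring, hρ]; ring
  rw [h₁, h₂, Int.mul_ediv_cancel_left _ (sub_ne_zero.2 hq),
    Int.mul_ediv_cancel_left _ (sub_ne_zero.2 hq)]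
  ring

lemma Nat.coprime_two_mul_add_two_add_two {t : ℕ} (ht : Odd t) :
    Nat.Coprime (2 * t + 2) (t + 2) := by
  rw [Nat.Coprime, show 2 * t + 2 = t + 1 * (t + 2) by ring, Nat.gcd_add_mul_right_left,
    show t + 2 = 2 + 1 * t by ring, Nat.gcd_add_mul_right_right]
  exact Nat.coprime_comm.1 (Nat.coprime_two_left.2 ht)

lemma gcd_mul_sq_sub_pow_sub_one_eq_one {q t : ℕ} {ρ : ℤ} (hq : 0 < q) (hqe : Even q)
    (ht : Odd t) (hρ : (q : ℤ) ^ t = (q - 1) * ρ + 1) :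
    Int.gcd (((q : ℤ) - 1) * q ^ 2 * ρ ^ 2 - q - 1) ((q ^ (2 * t + 2) - 1 : ℕ) : ℤ) = 1 := by
  set a : ℤ := ((q : ℤ) - 1) * q ^ 2 * ρ ^ 2 - q - 1
  set g := Int.gcd a ((q ^ (2 * t + 2) - 1 : ℕ) : ℤ)
  have hcast : ∀ e, ((q ^ e - 1 : ℕ) : ℤ) = (q : ℤ) ^ e - 1 := fun e => by
    push_cast [Nat.one_le_pow e q hq]; ring
  have hga : (g : ℤ) ∣ a := Int.gcd_dvd_left _ _
  have hgN : g ∣ q ^ (2 * t + 2) - 1 := Int.natCast_dvd_natCast.1 (Int.gcd_dvd_right _ _)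
  have hg₂ : Nat.Coprime 2 g := Nat.Coprime.coprime_dvd_right hgN <| Nat.coprime_two_left.2 <|
    Nat.Even.sub_odd (Nat.one_le_pow _ _ hq) (hqe.pow_of_ne_zero (by omega)) odd_one
  have hg_pow : g ∣ q ^ (t + 2) - 1 := by
    have h : (g : ℤ) ∣ 2 * ((q : ℤ) ^ (t + 2) - 1) := by
      have hgN' := Int.natCast_dvd_natCast.2 hgN
      rw [hcast] at hgN'
      have key : 2 * ((q : ℤ) ^ (t + 2) - 1) = ((q : ℤ) ^ (2 * t + 2) - 1) - (q - 1) * a := by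
        rw [show (q : ℤ) ^ (2 * t + 2) = q ^ t * q ^ t * q ^ 2 by ring, pow_add, hρ]
        ring
      rw [key]
      exact dvd_sub hgN' (dvd_mul_of_dvd_right hga _)
    rw [← hcast] at h
    exact_mod_cast (Nat.isCoprime_iff_coprime.2 hg₂.symm).dvd_of_dvd_mul_left h
  have hgq : (g : ℤ) ∣ (q : ℤ) - 1 := by
    have := Nat.dvd_gcd hgN hg_pow
    rw [Nat.pow_sub_one_gcd_pow_sub_one, Nat.coprime_two_mul_add_two_add_two ht] at this
    have := Int.natCast_dvd_natCast.2 this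
    rwa [hcast, pow_one] at this
  have hg : (g : ℤ) ∣ 2 := by
    have key : (2 : ℤ) = (q - 1) * (q ^ 2 * ρ ^ 2 - 1) - a := by ring
    rw [key]
    exact dvd_sub (dvd_mul_of_dvd_left hgq _) hga
  exact Nat.Coprime.eq_one_of_dvd hg₂.symm (by exact_mod_cast hg)

section Residues

variable {q t ρ : ℕ}

lemma intCast_pow_eq_sub_one_mul_add_one (hq : 1 ≤ q) (hρ : q ^ t = (q - 1) * ρ + 1) :
    (q : ℤ) ^ t = (q - 1) * ρ + 1 := by
  zify [hq] at hρ
  exact hρ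

lemma odd_add_two_mul_sub_one (hq : 1 < q) (hqe : Even q) (ht : Odd t) :
    Odd ((t + 2) * (q - 1)) :=
  Nat.odd_mul.2 ⟨by simpa [parity_simps] using ht, Nat.Even.sub_odd (by omega) hqe odd_one⟩

lemma exists_odd_qWeight_modEq_of_le (hq : 1 < q) (hqe : Even q) (ht : Odd t)
    (hρ : q ^ t = (q - 1) * ρ + 1) {k b : ℕ} (hb : b < q) (hkb : 2 * k + 1 ≤ b * ρ) :
    ∃ y < q ^ (2 * t + 2) - 1, Odd (qWeight q y) ∧
      (((q : ℤ) - 1) * q ^ 2 * ρ ^ 2 - q - 1) * ((q - 1) * k + b) ≡ y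
        [ZMOD (q : ℤ) ^ (2 * t + 2) - 1] := by
  obtain ⟨c, hc⟩ : ∃ c, c + (2 * k + 1) = b * ρ := ⟨_, Nat.sub_add_cancel hkb⟩
  have hbρ : b * ρ ≤ (q - 1) * ρ := Nat.mul_le_mul_right ρ (by omega)
  have hcP : c < q ^ t := by omega
  have hbq : 1 + b + q * b ≤ q ^ 2 := by
    obtain ⟨p, rfl⟩ : ∃ p, q = b + 1 + p := ⟨q - (b + 1), by omega⟩
    nlinarith
  have hD : c + q ^ t * (b + q * b) < q ^ (t + 2) := by rw [pow_add]; nlinarith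
  obtain ⟨L, hL⟩ : ∃ L, L + (c + q ^ t * (b + q * b)) + 1 = q ^ (t + 2) :=
    ⟨q ^ (t + 2) - (c + q ^ t * (b + q * b)) - 1, by omega⟩
  refine ⟨L + q ^ (t + 2) * c, ?_, ?_, ?_⟩
  · have hcq : q ^ (t + 2) * (c + 1) ≤ q ^ (2 * t + 2) := by
      rw [show 2 * t + 2 = (t + 2) + t by ring, pow_add q (t + 2) t]
      exact Nat.mul_le_mul_left _ hcP
    have hb₀ : 0 < b := Nat.pos_of_ne_zero (by rintro rfl; simp at hkb)
    have : 0 < q ^ t * (b + q * b) := by positivity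
    rw [Nat.mul_succ] at hcq
    omega
  · have hw := qWeight_compl_add_pow_mul hq hb hcP hL
    have hodd := odd_add_two_mul_sub_one hq hqe ht
    rw [← hw] at hodd
    simpa [parity_simps] using hodd
  · refine Int.modEq_iff_dvd.2 ⟨-k, ?_⟩
    have hρ' := intCast_pow_eq_sub_one_mul_add_one hq.le hρ
    zify at hc hL
    push_cast
    rw [show (q : ℤ) ^ (2 * t + 2) = q ^ t * q ^ t * q ^ 2 by ring, pow_add, hρ'] at *
    linear_combination hL + (q ^ 2 * ((q - 1) * ρ + 1) - 1) * hc

lemma exists_odd_qWeight_modEq_of_lt (hq : 1 < q) (hqe : Even q) (ht : Odd t)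
    (hρ : q ^ t = (q - 1) * ρ + 1) (hρo : Odd ρ) {k : ℕ} (hk : k ≤ ρ)
    (hkρ : ρ ≤ 2 * k) :
    ∃ y < q ^ (2 * t + 2) - 1, Odd (qWeight q y) ∧
      (((q : ℤ) - 1) * q ^ 2 * ρ ^ 2 - q - 1) * ((q - 1) * k + 1) ≡ y
        [ZMOD (q : ℤ) ^ (2 * t + 2) - 1] := by
  obtain ⟨w, hw⟩ : ∃ w, w + 1 + ρ = 2 * k := ⟨2 * k - ρ - 1, by grind⟩
  have hwq : ¬ q ∣ w + 1 := fun h => by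
    have := hqe.two_dvd.trans h
    have := Nat.odd_iff.1 hρo
    omega
  have hwP : w + 1 < q ^ t := by
    have : ρ ≤ (q - 1) * ρ := Nat.le_mul_of_pos_left ρ (by omega)
    omega
  obtain ⟨u, hu⟩ : ∃ u, u + w + 1 = q ^ t := ⟨q ^ t - w - 1, by omega⟩
  have hx : u + q ^ (t + 1) * (1 + q * (w + 1)) < q ^ (2 * t + 2) := by
    rw [pow_succ, show 2 * t + 2 = t + t + 2 by ring, pow_add, pow_add]
    have h₁ := Nat.mul_le_mul_left (q ^ t * q ^ 2) hwP
    have h₂ := Nat.mul_le_mul_left (q ^ t) (show 1 + q ≤ q ^ 2 by nlinarith)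
    nlinarith
  obtain ⟨v, hv⟩ : ∃ v, v + (u + q ^ (t + 1) * (1 + q * (w + 1))) + 1 = q ^ (2 * t + 2) :=
    ⟨_, Nat.sub_add_cancel hx⟩
  refine ⟨v, ?_, ?_, ?_⟩
  · have : 0 < q ^ (t + 1) * (1 + q * (w + 1)) := by positivity
    omega
  · have hwx := qWeight_add_pow_succ_mul hq hu hwq
    have hcompl := qWeight_add_qWeight_of_add_add_one_eq_pow hq hv
    have hv₂ : qWeight q v + 2 = (t + 2) * (q - 1) := by
      rw [hwx] at hcompl
      linarith
    have hodd := odd_add_two_mul_sub_one hq hqe ht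
    rw [← hv₂] at hodd
    simpa [parity_simps] using hodd
  · refine Int.modEq_iff_dvd.2 ⟨1 - k, ?_⟩
    have hρ' := intCast_pow_eq_sub_one_mul_add_one hq.le hρ
    zify at hw hu hv
    rw [show (q : ℤ) ^ (2 * t + 2) = q ^ t * q ^ t * q ^ 2 by ring, pow_succ, hρ'] at *
    linear_combination hv - hu + (1 - q ^ 2 * ((q - 1) * ρ + 1)) * hw

lemma toNat_emod_mem_Tset_of_modEq {q m y : ℕ} {x : ℤ} (hy : y < q ^ m - 1)
    (hw : Odd (qWeight q y)) (hxy : x ≡ y [ZMOD (q : ℤ) ^ m - 1]) :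
    (x % ((q ^ m - 1 : ℕ) : ℤ)).toNat ∈ Tset q m 1 := by
  have hy₀ : y ≠ 0 := by
    rintro rfl
    simp [qWeight] at hw
  have hN : (q : ℤ) ^ m - 1 = ((q ^ m - 1 : ℕ) : ℤ) := by
    push_cast [show 1 ≤ q ^ m by omega]; ring
  rw [hN] at hxy
  rw [hxy, Int.emod_eq_of_lt (by positivity) (by exact_mod_cast hy), Int.toNat_natCast]
  simp only [Tset, Finset.mem_filter, Finset.mem_Icc]
  exact ⟨⟨by omega, by omega⟩, Nat.odd_iff.1 hw⟩

lemma toNat_emod_mem_Tset (hq : 1 < q) (hqe : Even q) (ht : Odd t)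
    (hρ : q ^ t = (q - 1) * ρ + 1) {j : ℕ} (hj₁ : 1 ≤ j) (hj : j ≤ q ^ t) :
    (((((q : ℤ) - 1) * q ^ 2 * ρ ^ 2 - q - 1) * j) % ((q ^ (2 * t + 2) - 1 : ℕ) : ℤ)).toNat
      ∈ Tset q (2 * t + 2) 1 := by
  obtain ⟨r, k, hjk, hr⟩ := exists_eq_add_mul_lt (q := q - 1) (by omega) (j - 1)
  have hρo : Odd ρ := by
    have : Odd (q ^ t - 1) := Nat.Even.sub_odd (Nat.one_le_pow _ _ (by omega))
      (hqe.pow_of_ne_zero ht.pos.ne') odd_one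
    rw [hρ, Nat.add_sub_cancel] at this
    exact (Nat.odd_mul.1 this).2
  have hk : k ≤ ρ := Nat.le_of_mul_le_mul_left (by omega) (show 0 < q - 1 by omega)
  have hjZ : (j : ℤ) = (q - 1) * k + (r + 1) := by
    zify [show 1 ≤ q by omega, hj₁] at hjk
    linear_combination hjk
  obtain ⟨y, hy, hwy, hmod⟩ : ∃ y < q ^ (2 * t + 2) - 1, Odd (qWeight q y) ∧
      (((q : ℤ) - 1) * q ^ 2 * ρ ^ 2 - q - 1) * j ≡ y [ZMOD (q : ℤ) ^ (2 * t + 2) - 1] := by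
    rw [hjZ]
    by_cases hkr : 2 * k + 1 ≤ (r + 1) * ρ
    · exact_mod_cast exists_odd_qWeight_modEq_of_le hq hqe ht hρ (by omega) hkr
    · obtain rfl : r = 0 := by
        by_contra hr₀
        have : 2 * ρ ≤ (r + 1) * ρ := Nat.mul_le_mul_right ρ (by omega)
        have : (q - 1) * ρ ≤ (q - 1) * k := Nat.mul_le_mul_left _ (by omega)
        omega
      exact_mod_cast exists_odd_qWeight_modEq_of_lt hq hqe ht hρ hρo hk (by omega)
  exact toNat_emod_mem_Tset_of_modEq hy hwy hmod

end Residues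

theorem stmt9 (s q m n : ℕ) (hs : 2 ≤ s) (hq : q = 2 ^ s)
    (hm : 4 ≤ m) (hmod4 : m % 4 = 0) (hn : n = q ^ m - 1)
    (a : ℤ) (ha : a = ((q : ℤ) ^ m - 1) / ((q : ℤ) - 1) -
      2 * (((q : ℤ) ^ ((m + 2) / 2) - 1) / ((q : ℤ) - 1))) :
    Int.gcd a (n : ℤ) = 1 ∧
      ∀ i : ℤ, 1 ≤ i → i ≤ (q : ℤ) ^ ((m - 2) / 2) →
        ((a * i) % (n : ℤ)).toNat ∈ Tset q m 1 := by
  obtain ⟨t, rfl, ht⟩ : ∃ t, m = 2 * t + 2 ∧ Odd t :=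
    ⟨m / 2 - 1, by omega, Nat.odd_iff.2 (by omega)⟩
  have hq₁ : 1 < q := hq ▸ Nat.one_lt_two_pow (by omega)
  have hqe : Even q := hq ▸ Nat.even_pow.2 ⟨even_two, by omega⟩
  obtain ⟨ρ, hρ⟩ : ∃ ρ, q ^ t = (q - 1) * ρ + 1 := by
    obtain ⟨ρ, hρ⟩ := Nat.sub_one_dvd_pow_sub_one q t
    exact ⟨ρ, by have := Nat.one_le_pow t q (by omega); omega⟩
  have hρ' := intCast_pow_eq_sub_one_mul_add_one hq₁.le hρ
  rw [show (2 * t + 2 + 2) / 2 = t + 2 by omega,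
    ediv_sub_two_mul_ediv_eq (by exact_mod_cast hq₁.ne') hρ'] at ha
  subst ha hn
  refine ⟨gcd_mul_sq_sub_pow_sub_one_eq_one (by omega) hqe ht hρ', fun i hi₁ hi => ?_⟩
  lift i to ℕ using (by omega)
  rw [show (2 * t + 2 - 2) / 2 = t by omega] at hi
  exact toNat_emod_mem_Tset hq₁ hqe ht hρ (by exact_mod_cast hi₁) (by exact_mod_cast hi)
end
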